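/- arXiv:1505.04905 — 2 statements merged into one kernel-verified Lean document; each statement's English description precedes it below -/
import Mathlib

section
/- Let V : ℝ^d → ℝ be smooth and ℤ^d-periodic, and let μ(dq) = Z^{-1}e^{-V(q)}dq be the Gibbs measure on 𝕋^d. Define ξ̄₂(q) = −(3/4) ∇(ΔV)(q)·∇V(q) + (1/4) Δ²V(q) + (1/2) ∇V(q)^T ∇²V(q) ∇V(q) − (1/2) Tr[(∇²V(q))²]. Then ∫_{𝕋^d} ξ̄₂ dμ = 0. (This is the Gaussian average of the second-order term ξ₂ in the expansion of the Barker acceptance rate for the HMC proposal, and it implies that the equilibrium average acceptance rate is 1/2 + O(Δt³).) -/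
open MeasureTheory Real

noncomputable section

abbrev EucSp (d : ℕ) := EuclideanSpace ℝ (Fin d)

def basisE (d : ℕ) (i : Fin d) : EucSp d := EuclideanSpace.single i 1

def pd {d : ℕ} (f : EucSp d → ℝ) (i : Fin d) : EucSp d → ℝ :=
  fun q => fderiv ℝ f q (basisE d i)

def ZPeriodic {d : ℕ} (f : EucSp d → ℝ) : Prop :=
  ∀ (q : EucSp d) (i : Fin d), f (q + basisE d i) = f q

def cube (d : ℕ) : Set (EucSp d) := {q | ∀ i, 0 ≤ q i ∧ q i < 1}

def lap {d : ℕ} (f : EucSp d → ℝ) : EucSp d → ℝ :=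
  fun q => ∑ i, pd (pd f i) i q

/-- `ξ̄₂(q) = −(3/4)∇(ΔV)·∇V + (1/4)Δ²V + (1/2)(∇V)ᵀ∇²V∇V − (1/2)Tr[(∇²V)²]`. -/
def xiBar2 {d : ℕ} (V : EucSp d → ℝ) (q : EucSp d) : ℝ :=
  -(3 / 4) * (∑ i, pd (lap V) i q * pd V i q)
    + (1 / 4) * lap (lap V) q
    + (1 / 2) * (∑ i, ∑ j, pd V i q * pd (pd V j) i q * pd V j q)
    - (1 / 2) * (∑ i, ∑ j, (pd (pd V j) i q) ^ 2)

section Aux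

variable {d : ℕ}

lemma pd_contDiff {f : EucSp d → ℝ} (hf : ContDiff ℝ (⊤ : ℕ∞) f) (i : Fin d) :
    ContDiff ℝ (⊤ : ℕ∞) (pd f i) :=
  (hf.fderiv_right (by simp)).clm_apply contDiff_const

lemma pd_diff {f : EucSp d → ℝ} (hf : ContDiff ℝ (⊤ : ℕ∞) f) (i : Fin d) :
    Differentiable ℝ (pd f i) := (pd_contDiff hf i).differentiable (by simp)

lemma lap_contDiff {f : EucSp d → ℝ} (hf : ContDiff ℝ (⊤ : ℕ∞) f) :
    ContDiff ℝ (⊤ : ℕ∞) (lap f) := by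
  unfold lap
  exact ContDiff.sum fun i _ => pd_contDiff (pd_contDiff hf i) i

lemma pd_mul {a b : EucSp d → ℝ} (ha : Differentiable ℝ a) (hb : Differentiable ℝ b)
    (i : Fin d) (q : EucSp d) :
    pd (fun x => a x * b x) i q = pd a i q * b q + a q * pd b i q := by
  unfold pd
  rw [fderiv_fun_mul (ha q) (hb q)]
  simp
  ring

lemma expNeg_contDiff {V : EucSp d → ℝ} (hV : ContDiff ℝ (⊤ : ℕ∞) V) :
    ContDiff ℝ (⊤ : ℕ∞) (fun x => Real.exp (-V x)) :=
  (Real.contDiff_exp (n := (⊤ : ℕ∞))).comp hV.neg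

lemma pd_expNeg {V : EucSp d → ℝ} (hV : ContDiff ℝ (⊤ : ℕ∞) V) (i : Fin d) (q : EucSp d) :
    pd (fun x => Real.exp (-V x)) i q = -(pd V i q) * Real.exp (-V q) := by
  have h : HasFDerivAt (fun x => Real.exp (-V x))
      (Real.exp (-V q) • (-(fderiv ℝ V q))) q := by
    have h1 : HasFDerivAt (fun x => -V x) (-(fderiv ℝ V q)) q :=
      ((hV.differentiable (by simp) q).hasFDerivAt).neg
    exact (Real.hasDerivAt_exp (-V q)).comp_hasFDerivAt q h1
  unfold pd
  rw [h.fderiv]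
  simp
  ring

lemma pd_sum {ι : Type*} (s : Finset ι) {f : ι → EucSp d → ℝ}
    (hf : ∀ j, Differentiable ℝ (f j)) (i : Fin d) (q : EucSp d) :
    pd (fun x => ∑ j ∈ s, f j x) i q = ∑ j ∈ s, pd (f j) i q := by
  unfold pd
  rw [fderiv_fun_sum (fun j _ => (hf j q))]
  simp

lemma pd_eq_fderiv_fderiv {f : EucSp d → ℝ} (hf : ContDiff ℝ (⊤ : ℕ∞) f) (i j : Fin d) (q : EucSp d) :
    pd (pd f i) j q = fderiv ℝ (fderiv ℝ f) q (basisE d j) (basisE d i) := by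
  have hd : Differentiable ℝ (fderiv ℝ f) :=
    (hf.fderiv_right (n := (⊤ : ℕ∞)) (m := (⊤ : ℕ∞)) (by simp)).differentiable (by simp)
  unfold pd
  rw [fderiv_clm_apply (hd q) (differentiableAt_const _)]
  simp

lemma pd_comm {f : EucSp d → ℝ} (hf : ContDiff ℝ (⊤ : ℕ∞) f) (i j : Fin d) (q : EucSp d) :
    pd (pd f i) j q = pd (pd f j) i q := by
  rw [pd_eq_fderiv_fderiv hf, pd_eq_fderiv_fderiv hf]
  exact ((hf.contDiffAt (x := q)).isSymmSndFDerivAt (by norm_num; exact WithTop.coe_le_coe.mpr (le_top : (2:ℕ∞) ≤ ⊤))).eq _ _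

lemma third_deriv_sum {V : EucSp d → ℝ} (hV : ContDiff ℝ (⊤ : ℕ∞) V) (j : Fin d) (q : EucSp d) :
    ∑ i, pd (pd (pd V j) i) i q = pd (lap V) j q := by
  have h : ∀ i : Fin d, pd (pd (pd V j) i) i q = pd (pd (pd V i) i) j q := by
    intro i
    have h1 : pd (pd V j) i = pd (pd V i) j := funext fun x => pd_comm hV j i x
    rw [h1]
    exact pd_comm (pd_contDiff hV i) j i q
  rw [Finset.sum_congr rfl fun i _ => h i]
  have : pd (lap V) j q = pd (fun x => ∑ i, pd (pd V i) i x) j q := rfl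
  rw [this, pd_sum _ (fun i => pd_diff (pd_contDiff hV i) i)]

lemma pointwise_identity {V : EucSp d → ℝ} (hV : ContDiff ℝ (⊤ : ℕ∞) V) (q : EucSp d) :
    xiBar2 V q * Real.exp (-V q) =
      (1/4) * (∑ i, pd (fun x => pd (lap V) i x * Real.exp (-V x)) i q)
      - (1/2) * (∑ i, ∑ j,
          pd (fun x => pd (pd V j) i x * (pd V j x * Real.exp (-V x))) i q) := by
  set E : EucSp d → ℝ := fun x => Real.exp (-V x) with hE
  have hVd : Differentiable ℝ V := hV.differentiable (by simp)
  have hEd : Differentiable ℝ E := (expNeg_contDiff hV).differentiable (by simp)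
  have hL : ContDiff ℝ (⊤ : ℕ∞) (lap V) := lap_contDiff hV
  -- first sum
  have h1 : ∀ i : Fin d, pd (fun x => pd (lap V) i x * E x) i q
      = pd (pd (lap V) i) i q * E q + pd (lap V) i q * (-(pd V i q) * E q) := by
    intro i
    rw [pd_mul (pd_diff hL i) hEd, pd_expNeg hV]
  have h2 : ∀ i j : Fin d,
      pd (fun x => pd (pd V j) i x * (pd V j x * E x)) i q
      = pd (pd (pd V j) i) i q * (pd V j q * E q)
        + pd (pd V j) i q * (pd (pd V j) i q * E q + pd V j q * (-(pd V i q) * E q)) := by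
    intro i j
    rw [pd_mul (b := fun x => pd V j x * E x) (pd_diff (pd_contDiff hV j) i) ((pd_diff hV j).mul hEd),
      pd_mul (pd_diff hV j) hEd, pd_expNeg hV]
  rw [Finset.sum_congr rfl fun i _ => h1 i,
    Finset.sum_congr rfl fun i _ => Finset.sum_congr rfl fun j _ => h2 i j]
  -- split sums
  rw [Finset.sum_add_distrib]
  have hs2 : ∀ i : Fin d, ∑ j,
      (pd (pd (pd V j) i) i q * (pd V j q * E q)
        + pd (pd V j) i q * (pd (pd V j) i q * E q + pd V j q * (-(pd V i q) * E q)))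
      = ∑ j, pd (pd (pd V j) i) i q * (pd V j q * E q)
        + ∑ j, pd (pd V j) i q * (pd (pd V j) i q * E q + pd V j q * (-(pd V i q) * E q)) :=
    fun i => Finset.sum_add_distrib
  rw [Finset.sum_congr rfl fun i _ => hs2 i, Finset.sum_add_distrib]
  -- identify third-derivative block: swap order of summation then use third_deriv_sum
  rw [Finset.sum_comm (f := fun i j => pd (pd (pd V j) i) i q * (pd V j q * E q))]
  have h3 : ∀ j : Fin d, ∑ i, pd (pd (pd V j) i) i q * (pd V j q * E q)
      = pd (lap V) j q * (pd V j q * E q) := by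
    intro j
    rw [← Finset.sum_mul, third_deriv_sum hV]
  rw [Finset.sum_congr rfl fun j _ => h3 j]
  -- collapse each sum into scalar * E q form
  have r1a : ∑ i, pd (pd (lap V) i) i q * E q = (∑ i, pd (pd (lap V) i) i q) * E q :=
    (Finset.sum_mul _ _ _).symm
  have r1b : ∑ i, pd (lap V) i q * (-(pd V i q) * E q)
      = (∑ i, pd (lap V) i q * pd V i q) * (-E q) := by
    rw [Finset.sum_mul]
    exact Finset.sum_congr rfl fun i _ => by ring
  have r2 : ∑ j, pd (lap V) j q * (pd V j q * E q)
      = (∑ i, pd (lap V) i q * pd V i q) * E q := by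
    rw [Finset.sum_mul]
    exact Finset.sum_congr rfl fun j _ => by ring
  have r3 : ∑ i, ∑ j, pd (pd V j) i q * (pd (pd V j) i q * E q + pd V j q * (-(pd V i q) * E q))
      = (∑ i, ∑ j, (pd (pd V j) i q) ^ 2) * E q
        - (∑ i, ∑ j, pd V i q * pd (pd V j) i q * pd V j q) * E q := by
    simp only [Finset.sum_mul]
    rw [← Finset.sum_sub_distrib]
    refine Finset.sum_congr rfl fun i _ => ?_
    rw [← Finset.sum_sub_distrib]
    exact Finset.sum_congr rfl fun j _ => by ring
  rw [r1a, r1b, r2, r3]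
  unfold xiBar2
  have hB : lap (lap V) q = ∑ i, pd (pd (lap V) i) i q := rfl
  rw [hB]
  ring

lemma fderiv_translate {f : EucSp d → ℝ} (hf : Differentiable ℝ f) (c : EucSp d)
    (h : ∀ x, f (x + c) = f x) (q : EucSp d) : fderiv ℝ f (q + c) = fderiv ℝ f q := by
  have h1 : HasFDerivAt (fun x : EucSp d => f (x + c))
      ((fderiv ℝ f (q + c)).comp (ContinuousLinearMap.id ℝ (EucSp d))) q :=
    (hf (q + c)).hasFDerivAt.comp q ((hasFDerivAt_id q).add_const c)
  rw [ContinuousLinearMap.comp_id] at h1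
  have h2 : (fun x : EucSp d => f (x + c)) = f := funext h
  rw [h2] at h1
  exact (h1.fderiv).symm ▸ rfl

lemma pd_periodic {f : EucSp d → ℝ} (hf : ContDiff ℝ (⊤ : ℕ∞) f) (hper : ZPeriodic f) (i : Fin d) :
    ZPeriodic (pd f i) := by
  intro q j
  unfold pd
  rw [fderiv_translate (hf.differentiable (by simp)) _ (fun x => hper x j) q]

lemma lap_periodic {f : EucSp d → ℝ} (hf : ContDiff ℝ (⊤ : ℕ∞) f) (hper : ZPeriodic f) :
    ZPeriodic (lap f) := by
  intro q j
  unfold lap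
  exact Finset.sum_congr rfl fun i _ =>
    pd_periodic (pd_contDiff hf i) (pd_periodic hf hper i) i q j

lemma integrableOn_cube {f : EucSp d → ℝ} (hf : Continuous f) :
    IntegrableOn f (cube d) := by
  set φ := (MeasurableEquiv.toLp 2 (Fin d → ℝ)).symm
  have hφc : Continuous ⇑φ.symm := by
    rw [MeasurableEquiv.symm_symm, MeasurableEquiv.coe_toLp]
    exact PiLp.continuous_toLp (p := 2) (β := fun _ : Fin d => ℝ)
  have hK : IsCompact (⇑φ.symm '' (Set.univ.pi fun _ : Fin d => Set.Icc (0:ℝ) 1)) :=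
    (isCompact_univ_pi fun _ => isCompact_Icc).image hφc
  refine (hf.continuousOn.integrableOn_compact hK).mono_set ?_
  intro q hq
  refine ⟨φ q, fun i _ => ⟨(hq i).1, (hq i).2.le⟩, ?_⟩
  simp

lemma integral_pd_cube {n : ℕ} (g : EucSp (n+1) → ℝ) (hg : ContDiff ℝ (⊤ : ℕ∞) g)
    (hper : ZPeriodic g) (i : Fin (n+1)) :
    ∫ q in cube (n+1), pd g i q = 0 := by
  classical
  let φ := (MeasurableEquiv.toLp 2 (Fin (n+1) → ℝ)).symm
  have hφ : MeasurePreserving φ.symm :=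
    (EuclideanSpace.volume_preserving_symm_measurableEquiv_toLp (Fin (n+1))).symm
  have hφc : Continuous ⇑φ.symm := by
    rw [MeasurableEquiv.symm_symm, MeasurableEquiv.coe_toLp]
    exact PiLp.continuous_toLp (p := 2) (β := fun _ : Fin (n+1) => ℝ)
  let ψ := MeasurableEquiv.piFinSuccAbove (fun _ : Fin (n+1) => ℝ) i
  have hψ : MeasurePreserving ψ.symm :=
    (volume_preserving_piFinSuccAbove (fun _ : Fin (n+1) => ℝ) i).symm
  have hψc : Continuous ⇑ψ.symm := by
    have : ⇑ψ.symm = fun z : ℝ × (Fin n → ℝ) => i.insertNth (α := fun _ => ℝ) z.1 z.2 := by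
      funext z; rfl
    rw [this]
    exact Continuous.finInsertNth i
      (continuous_fst : Continuous fun z : ℝ × (Fin n → ℝ) => z.1)
      (continuous_snd : Continuous fun z : ℝ × (Fin n → ℝ) => z.2)
  have happ : ∀ (t : ℝ) (y : Fin n → ℝ) (k : Fin (n+1)),
      φ.symm (ψ.symm (t, y)) k = (i.insertNth (α := fun _ => ℝ) t y) k := by
    intro t y k
    simp [φ, ψ, MeasurableEquiv.symm_symm, MeasurableEquiv.coe_toLp,
      MeasurableEquiv.piFinSuccAbove_symm_apply, Fin.insertNthEquiv]
  -- the integrand on the product space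
  set H : ℝ × (Fin n → ℝ) → ℝ := fun z => pd g i (φ.symm (ψ.symm z)) with hHdef
  have hHc : Continuous H := ((pd_contDiff hg i).continuous).comp (hφc.comp hψc)
  set B : Set (Fin n → ℝ) := {y | ∀ j, 0 ≤ y j ∧ y j < 1} with hBdef
  have hpre : ψ.symm ⁻¹' (φ.symm ⁻¹' cube (n+1)) = Set.Ico (0:ℝ) 1 ×ˢ B := by
    ext ⟨t, y⟩
    simp only [Set.mem_preimage, Set.mem_prod, Set.mem_Ico, hBdef, Set.mem_setOf_eq]
    constructor
    · intro h
      refine ⟨?_, fun j => ?_⟩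
      · have := h i; rw [happ t y i] at this; simpa using this
      · have := h (i.succAbove j); rw [happ t y _] at this
        simpa [Fin.insertNth_apply_succAbove] using this
    · rintro ⟨h1, h2⟩ k
      show 0 ≤ φ.symm (ψ.symm (t, y)) k ∧ φ.symm (ψ.symm (t, y)) k < 1
      rw [happ t y k]
      refine Fin.succAboveCases i ?_ ?_ k
      · simpa using h1
      · intro j
        simpa [Fin.insertNth_apply_succAbove] using h2 j
  -- integrability
  have hInt : Integrable H ((volume.restrict (Set.Ico (0:ℝ) 1)).prod (volume.restrict B)) := by
    rw [Measure.prod_restrict]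
    have hK : IsCompact ((Set.Icc (0:ℝ) 1) ×ˢ (Set.univ.pi fun _ : Fin n => Set.Icc (0:ℝ) 1)) :=
      isCompact_Icc.prod (isCompact_univ_pi fun _ => isCompact_Icc)
    have : IntegrableOn H (Set.Ico (0:ℝ) 1 ×ˢ B) := by
      refine (hHc.continuousOn.integrableOn_compact hK).mono_set ?_
      refine Set.prod_mono Set.Ico_subset_Icc_self ?_
      intro y hy j _
      exact ⟨(hy j).1, le_of_lt (hy j).2⟩
    exact this
  -- inner integral vanishes
  have key : ∀ y : Fin n → ℝ, (∫ t in Set.Ico (0:ℝ) 1, H (t, y)) = 0 := by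
    intro y
    set c : EucSp (n+1) := φ.symm (ψ.symm (0, y)) with hc
    have haff : ∀ t : ℝ, φ.symm (ψ.symm (t, y)) = c + t • basisE (n+1) i := by
      intro t
      apply PiLp.ext
      intro k
      rw [show (c + t • basisE (n+1) i) k = c k + t * (basisE (n+1) i) k from rfl,
        happ t y k, hc, happ 0 y k]
      unfold basisE
      refine Fin.succAboveCases i ?_ ?_ k
      · simp [EuclideanSpace.single_apply]
      · intro j
        simp [EuclideanSpace.single_apply, Fin.succAbove_ne i j,
          Fin.insertNth_apply_succAbove]
    have hH' : ∀ t : ℝ, H (t, y) = pd g i (c + t • basisE (n+1) i) := fun t => by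
      rw [hHdef]; simp only; rw [haff t]
    have hderiv : ∀ t : ℝ, HasDerivAt (fun s : ℝ => g (c + s • basisE (n+1) i))
        (pd g i (c + t • basisE (n+1) i)) t := by
      intro t
      have h1 : HasDerivAt (fun s : ℝ => c + s • basisE (n+1) i) (basisE (n+1) i) t := by
        simpa using ((hasDerivAt_id t).smul_const (basisE (n+1) i)).const_add c
      have h2 : HasFDerivAt g (fderiv ℝ g (c + t • basisE (n+1) i)) (c + t • basisE (n+1) i) :=
        (hg.differentiable (by simp) _).hasFDerivAt
      exact h2.comp_hasDerivAt t h1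
    have hcont : Continuous fun t : ℝ => pd g i (c + t • basisE (n+1) i) :=
      (pd_contDiff hg i).continuous.comp (by fun_prop)
    calc ∫ t in Set.Ico (0:ℝ) 1, H (t, y)
        = ∫ t in Set.Ico (0:ℝ) 1, pd g i (c + t • basisE (n+1) i) := by
          simp_rw [hH']
      _ = ∫ t in Set.Ioc (0:ℝ) 1, pd g i (c + t • basisE (n+1) i) :=
          setIntegral_congr_set Ico_ae_eq_Ioc
      _ = ∫ t in (0:ℝ)..1, pd g i (c + t • basisE (n+1) i) :=
          (intervalIntegral.integral_of_le zero_le_one).symm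
      _ = g (c + (1:ℝ) • basisE (n+1) i) - g (c + (0:ℝ) • basisE (n+1) i) :=
          intervalIntegral.integral_eq_sub_of_hasDerivAt
            (f := fun s : ℝ => g (c + s • basisE (n+1) i)) (fun t _ => hderiv t)
            (hcont.intervalIntegrable 0 1)
      _ = 0 := by
          rw [one_smul, zero_smul, add_zero, hper c i, sub_self]
  -- put it together
  have step1 : ∫ q in cube (n+1), pd g i q
      = ∫ x in (φ.symm ⁻¹' cube (n+1)), pd g i (φ.symm x) :=
    (hφ.setIntegral_preimage_emb φ.symm.measurableEmbedding _ _).symm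
  have step2 : ∫ x in (φ.symm ⁻¹' cube (n+1)), pd g i (φ.symm x)
      = ∫ z in (ψ.symm ⁻¹' (φ.symm ⁻¹' cube (n+1))), H z :=
    (hψ.setIntegral_preimage_emb ψ.symm.measurableEmbedding _ _).symm
  rw [step1, step2, hpre]
  calc ∫ z in Set.Ico (0:ℝ) 1 ×ˢ B, H z
      = ∫ z, H z ∂((volume.restrict (Set.Ico (0:ℝ) 1)).prod (volume.restrict B)) := by
        rw [Measure.prod_restrict]; rfl
    _ = ∫ y, ∫ t, H (t, y) ∂(volume.restrict (Set.Ico (0:ℝ) 1)) ∂(volume.restrict B) :=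
        integral_prod_symm _ hInt
    _ = 0 := by
        simp_rw [key]
        exact integral_zero _ _

lemma integral_pd_cube' {d : ℕ} (g : EucSp d → ℝ) (hg : ContDiff ℝ (⊤ : ℕ∞) g)
    (hper : ZPeriodic g) (i : Fin d) :
    ∫ q in cube d, pd g i q = 0 := by
  cases d with
  | zero => exact i.elim0
  | succ n => exact integral_pd_cube g hg hper i

end Aux

/-- `∫ ξ̄₂ dμ = 0` for the Gibbs measure `μ = Z⁻¹ e^{-V} dq` on the torus. -/
theorem stmt12
    (d : ℕ) (V : EucSp d → ℝ)
    (hV : ContDiff ℝ (⊤ : ℕ∞) V) (hVper : ZPeriodic V)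
    (Z : ℝ) (hZ : Z = ∫ q in cube d, Real.exp (-V q)) :
    (∫ q in cube d, xiBar2 V q * (Z⁻¹ * Real.exp (-V q))) = 0 := by
  have hE : ContDiff ℝ (⊤ : ℕ∞) (fun x : EucSp d => Real.exp (-V x)) := expNeg_contDiff hV
  have hFc : ∀ i : Fin d, ContDiff ℝ (⊤ : ℕ∞) (fun x => pd (lap V) i x * Real.exp (-V x)) :=
    fun i => (pd_contDiff (lap_contDiff hV) i).mul hE
  have hGc : ∀ i j : Fin d,
      ContDiff ℝ (⊤ : ℕ∞) (fun x => pd (pd V j) i x * (pd V j x * Real.exp (-V x))) :=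
    fun i j => (pd_contDiff (pd_contDiff hV j) i).mul ((pd_contDiff hV j).mul hE)
  have hFper : ∀ i : Fin d, ZPeriodic (fun x => pd (lap V) i x * Real.exp (-V x)) := by
    intro i q k
    simp only []
    rw [pd_periodic (lap_contDiff hV) (lap_periodic hV hVper) i q k, hVper q k]
  have hGper : ∀ i j : Fin d,
      ZPeriodic (fun x => pd (pd V j) i x * (pd V j x * Real.exp (-V x))) := by
    intro i j q k
    simp only []
    rw [pd_periodic (pd_contDiff hV j) (pd_periodic hV hVper j) i q k,
      pd_periodic hV hVper j q k, hVper q k]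
  have hI1 : ∀ i : Fin d,
      IntegrableOn (fun q => pd (fun x => pd (lap V) i x * Real.exp (-V x)) i q)
        (cube d) volume :=
    fun i => integrableOn_cube (pd_contDiff (hFc i) i).continuous
  have hI2 : ∀ i j : Fin d,
      IntegrableOn
        (fun q => pd (fun x => pd (pd V j) i x * (pd V j x * Real.exp (-V x))) i q)
        (cube d) volume :=
    fun i j => integrableOn_cube (pd_contDiff (hGc i j) i).continuous
  have h0 : ∀ q, xiBar2 V q * (Z⁻¹ * Real.exp (-V q))
      = Z⁻¹ * (xiBar2 V q * Real.exp (-V q)) := fun q => by ring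
  simp only [h0]
  rw [integral_const_mul]
  have hmain : ∫ q in cube d, xiBar2 V q * Real.exp (-V q) = 0 := by
    simp only [pointwise_identity hV]
    rw [integral_sub ((integrable_finset_sum _ fun i _ => hI1 i).const_mul _)
      ((integrable_finset_sum _ fun i _ =>
        integrable_finset_sum _ fun j _ => hI2 i j).const_mul _),
      integral_const_mul, integral_const_mul,
      integral_finset_sum _ (fun i _ => hI1 i),
      integral_finset_sum _ (fun i _ => integrable_finset_sum _ fun j _ => hI2 i j),
      Finset.sum_congr rfl (fun i _ => integral_pd_cube' _ (hFc i) (hFper i) i),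
      Finset.sum_congr rfl (fun i (_ : i ∈ Finset.univ) =>
        integral_finset_sum _ (fun j _ => hI2 i j))]
    have : ∀ i : Fin d, ∑ j : Fin d,
        ∫ q in cube d, pd (fun x => pd (pd V j) i x * (pd V j x * Real.exp (-V x))) i q
        = 0 := by
      intro i
      rw [Finset.sum_congr rfl (fun j _ => integral_pd_cube' _ (hGc i j) (hGper i j) i)]
      simp
    rw [Finset.sum_congr rfl fun i _ => this i]
    simp
  rw [hmain, mul_zero]
end
end

section
/- Let V, M : ℝ → ℝ be smooth and 1-periodic with M(q) > 0 for all q, let β > 0 and η ∈ ℝ. Define ψ_η(q) = e^{−βV(q)} ∫_0^1 e^{βV(q+y) − ηy} / M(q+y) dy. Then ψ_η is smooth, positive and 1-periodic, and it satisfies the stationary Fokker–Planck equation d/dq ( M(q) [ (βV'(q) − η) ψ_η(q) + ψ_η'(q) ] ) = 0 on ℝ; more precisely, the function q ↦ M(q)[(βV'(q) − η)ψ_η(q) + ψ_η'(q)] is constant. -/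
open Real intervalIntegral

noncomputable section

/-- the explicit 1-periodic density
`ψ_η(q) = e^{−βV(q)} ∫_0^1 e^{βV(q+y)−ηy}/M(q+y) dy` is smooth, positive,
1-periodic, and solves the stationary Fokker–Planck equation: the flux
`q ↦ M(q)[(βV'(q) − η)ψ_η(q) + ψ_η'(q)]` is constant. -/
theorem stmt18
    (V M : ℝ → ℝ) (hV : ContDiff ℝ (⊤ : ℕ∞) V) (hM : ContDiff ℝ (⊤ : ℕ∞) M)
    (hVper : ∀ q, V (q + 1) = V q) (hMper : ∀ q, M (q + 1) = M q)
    (hMpos : ∀ q, 0 < M q)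
    (β η : ℝ) (hβ : 0 < β)
    (ψ : ℝ → ℝ)
    (hψ : ψ = fun q => Real.exp (-(β * V q)) *
      ∫ y in (0:ℝ)..1, Real.exp (β * V (q + y) - η * y) / M (q + y)) :
    ContDiff ℝ (⊤ : ℕ∞) ψ ∧ (∀ q, 0 < ψ q) ∧ (∀ q, ψ (q + 1) = ψ q) ∧
      ∃ c : ℝ, ∀ q, M q * ((β * deriv V q - η) * ψ q + deriv ψ q) = c := by
  have hMne : ∀ q, M q ≠ 0 := fun q => (hMpos q).ne'
  set g : ℝ → ℝ := fun u => Real.exp (β * V u - η * u) / M u with hgdef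
  have hgc : ContDiff ℝ (⊤ : ℕ∞) g :=
    (((hV.const_smul β).sub (contDiff_id.const_smul η)).exp).div hM hMne
  have hgcont : Continuous g := hgc.continuous
  have hgpos : ∀ u, 0 < g u := fun u => div_pos (Real.exp_pos _) (hMpos u)
  have hgper : ∀ u, g (u + 1) = Real.exp (-η) * g u := by
    intro u
    simp only [hgdef, hVper, hMper]
    rw [← mul_div_assoc, ← Real.exp_add,
      show -η + (β * V u - η * u) = β * V u - η * (u + 1) by ring]
  set H : ℝ → ℝ := fun q => ∫ u in (0:ℝ)..q, g u with hHdef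
  have hHd : ∀ q, HasDerivAt H (g q) q := fun q =>
    (hgcont.integral_hasStrictDerivAt 0 q).hasDerivAt
  have hHsmooth : ContDiff ℝ (⊤ : ℕ∞) H := by
    have hderiv : deriv H = g := funext fun q => (hHd q).deriv
    exact contDiff_infty_iff_deriv.mpr ⟨fun q => (hHd q).differentiableAt, hderiv ▸ hgc⟩
  have hint : ∀ a b : ℝ, H b - H a = ∫ u in a..b, g u := by
    intro a b
    exact integral_interval_sub_left (hgcont.intervalIntegrable 0 b)
      (hgcont.intervalIntegrable 0 a)
  set E : ℝ → ℝ := fun q => Real.exp (-(β * V q) + η * q) with hEdef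
  have hEsmooth : ContDiff ℝ (⊤ : ℕ∞) E :=
    (((hV.const_smul β).neg).add (contDiff_id.const_smul η)).exp
  have hψeq : ∀ q, ψ q = E q * (H (q + 1) - H q) := by
    intro q
    rw [hψ]
    simp only
    have h1 : ∀ y : ℝ, Real.exp (β * V (q + y) - η * y) / M (q + y)
        = Real.exp (η * q) * g (q + y) := by
      intro y
      simp only [hgdef]
      rw [← mul_div_assoc, ← Real.exp_add,
        show η * q + (β * V (q + y) - η * (q + y)) = β * V (q + y) - η * y by ring]
    rw [intervalIntegral.integral_congr (fun y _ => h1 y),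
      intervalIntegral.integral_const_mul, intervalIntegral.integral_comp_add_left g,
      hint q (q + 1)]
    simp only [add_zero, hEdef]
    rw [← mul_assoc, ← Real.exp_add]
  have hψfun : ψ = fun q => E q * (H (q + 1) - H q) := funext hψeq
  have hGd : ∀ q, HasDerivAt (fun q => H (q + 1) - H q)
      ((Real.exp (-η) - 1) * g q) q := by
    intro q
    have h1 : HasDerivAt (fun q => H (q + 1)) (g (q + 1)) q := by
      have := (hHd (q + 1)).comp q ((hasDerivAt_id q).add_const 1)
      exact this.congr_deriv (by simp)
    have h2 := h1.sub (hHd q)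
    have heq : g (q + 1) - g q = (Real.exp (-η) - 1) * g q := by
      rw [hgper]; ring
    rwa [heq] at h2
  have hEd : ∀ q, HasDerivAt E ((-(β * deriv V q) + η) * E q) q := by
    intro q
    have hVd : HasDerivAt V (deriv V q) q :=
      (hV.differentiable (by simp) q).hasDerivAt
    have h1 : HasDerivAt (fun q => -(β * V q) + η * q)
        (-(β * deriv V q) + η) q := by
      have := ((hVd.const_mul β).neg).add ((hasDerivAt_id q).const_mul η)
      exact this.congr_deriv (by simp)
    have h2 := h1.exp
    simpa [hEdef, mul_comm] using h2
  have hψd : ∀ q, HasDerivAt ψ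
      ((-(β * deriv V q) + η) * E q * (H (q + 1) - H q)
        + E q * ((Real.exp (-η) - 1) * g q)) q := by
    intro q
    rw [hψfun]
    exact (hEd q).mul (hGd q)
  refine ⟨?_, ?_, ?_, Real.exp (-η) - 1, ?_⟩
  · rw [hψfun]
    exact hEsmooth.mul ((hHsmooth.comp (contDiff_id.add contDiff_const)).sub hHsmooth)
  · intro q
    rw [hψeq q]
    have h3 : 0 < ∫ u in q..(q+1), g u :=
      intervalIntegral_pos_of_pos (hgcont.intervalIntegrable q (q+1)) hgpos (by linarith)
    rw [← hint] at h3
    exact mul_pos (Real.exp_pos _) h3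
  · intro q
    rw [hψeq (q + 1), hψeq q]
    rw [hint, hint]
    have h2 : (∫ u in (q+1)..(q+1+1), g u) = Real.exp (-η) * ∫ u in q..(q+1), g u := by
      rw [← intervalIntegral.integral_const_mul]
      have h3 : (∫ u in q..(q+1), Real.exp (-η) * g u) = ∫ u in q..(q+1), g (u + 1) :=
        intervalIntegral.integral_congr fun u _ => (hgper u).symm
      rw [h3, intervalIntegral.integral_comp_add_right g 1]
    rw [h2, hEdef]
    simp only [hVper]
    rw [← mul_assoc, ← Real.exp_add,
      show -(β * V q) + η * (q + 1) + -η = -(β * V q) + η * q by ring]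
  · intro q
    rw [(hψd q).deriv, hψeq q]
    have hEg : E q * g q = 1 / M q := by
      simp only [hEdef, hgdef]
      rw [← mul_div_assoc, ← Real.exp_add,
        show -(β * V q) + η * q + (β * V q - η * q) = 0 by ring, Real.exp_zero]
    have hkey : M q * ((β * deriv V q - η) * (E q * (H (q + 1) - H q)) +
        ((-(β * deriv V q) + η) * E q * (H (q + 1) - H q)
          + E q * ((Real.exp (-η) - 1) * g q)))
        = M q * (E q * g q) * (Real.exp (-η) - 1) := by ring
    rw [hkey, hEg]
    rw [mul_one_div, div_self (hMne q), one_mul]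
end
end
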